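/- Let τ : 𝔻 → (0,∞) be a positive function satisfying properties (L), and let δ ∈ (0, m_τ). Then there exists a sequence of points {a_k} ⊂ 𝔻 such that: (1) a_j ∉ D(δτ(a_k)) for j ≠ k; (2) ⋃_k D(δτ(a_k)) = 𝔻; (3) D̃(δτ(a_k)) ⊂ D(3δτ(a_k)), where D̃(δτ(a_k)) = ⋃_{z ∈ D(δτ(a_k))} D(δτ(z)); (4) the family {D(3δτ(a_k))} is a covering of 𝔻 of finite multiplicity N, i.e. each point of 𝔻 lies in at most N of the disks D(3δτ(a_k)). -/

import Mathlib

open MeasureTheory Filter Set Topology ComplexConjugate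
open scoped ENNReal NNReal

noncomputable section

/-- The open unit disk in `ℂ`. -/
def UD : Set ℂ := Metric.ball 0 1

/-- The normalized area measure on `ℂ` (planar Lebesgue measure divided by `π`),
so that `UD` has measure `1`. -/
def dA : Measure ℂ := (ENNReal.ofReal (1 / Real.pi)) • (volume : Measure ℂ)

/-- The Laplacian of a function `f : ℂ → ℝ`, as the sum of the second derivatives in the
horizontal and the vertical direction. -/
def lap (f : ℂ → ℝ) (z : ℂ) : ℝ :=
  iteratedDeriv 2 (fun t : ℝ => f (z + (t : ℂ))) 0 +
    iteratedDeriv 2 (fun t : ℝ => f (z + (t : ℂ) * Complex.I)) 0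

/-- `τ = (Δφ)^{-1/2}`. -/
def tauOf (φ : ℂ → ℝ) (z : ℂ) : ℝ := (lap φ z) ^ (-(1 / 2) : ℝ)

/-- The radial profile of `τ`. -/
def tauR (φ : ℂ → ℝ) (r : ℝ) : ℝ := tauOf φ ((r : ℂ))

/-- The weight `ω = e^{-φ}`. -/
def wt (φ : ℂ → ℝ) (z : ℂ) : ℝ := Real.exp (-φ z)

/-- The radial profile of the weight `ω = e^{-φ}`. -/
def wtR (φ : ℂ → ℝ) (r : ℝ) : ℝ := wt φ ((r : ℂ))

/-- The filter of approach to the boundary of the disk: `|z| → 1⁻`. -/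
def toBdry : Filter ℂ := Filter.comap norm (nhdsWithin 1 (Set.Iio 1))

/-- The class `𝒲` of exponential type weights `ω = e^{-φ}`. -/
structure IsWeightW (φ : ℂ → ℝ) : Prop where
  smooth : ContDiffOn ℝ 2 φ UD
  radial : ∀ z ∈ UD, φ z = φ ((norm z : ℂ))
  lap_lb : ∃ c : ℝ, 0 < c ∧ ∀ z ∈ UD, c ≤ lap φ z
  tau_decr : ∀ r s : ℝ, 0 ≤ r → r ≤ s → s < 1 → tauR φ s ≤ tauR φ r
  tau_to_zero : Tendsto (tauR φ) (nhdsWithin 1 (Set.Iio 1)) (nhds 0)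
  tau_deriv_to_zero : Tendsto (deriv (tauR φ)) (nhdsWithin 1 (Set.Iio 1)) (nhds 0)
  extra : (∃ c : ℝ, 0 < c ∧
      MonotoneOn (fun r : ℝ => tauR φ r * (1 - r) ^ (-c)) (Set.Ico (0 : ℝ) 1)) ∨
    Tendsto (fun r : ℝ => deriv (tauR φ) r * Real.log (1 / tauR φ r))
      (nhdsWithin 1 (Set.Iio 1)) (nhds 0)

/-- A weight `ω = e^{-φ}` is regular: `ω(1-δt)/ω(1-t) → 0` as `t → 0⁺`, for every `0<δ<1`. -/
def IsRegularWt (φ : ℂ → ℝ) : Prop :=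
  ∀ δ : ℝ, 0 < δ → δ < 1 →
    Tendsto (fun t : ℝ => wtR φ (1 - δ * t) / wtR φ (1 - t))
      (nhdsWithin 0 (Set.Ioi 0)) (nhds 0)

/-- An analytic self-map of the unit disk. -/
def IsSelfMapD (φ₀ : ℂ → ℂ) : Prop :=
  DifferentiableOn ℂ φ₀ UD ∧ Set.MapsTo φ₀ UD UD

/-- `∫_𝔻 |f|^p ω dA` as a lower integral. -/
def apInt (p : ℝ) (φ : ℂ → ℝ) (f : ℂ → ℂ) : ℝ≥0∞ :=
  ∫⁻ z in UD, ENNReal.ofReal (norm (f z) ^ p * wt φ z) ∂dA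

/-- Membership in the weighted Bergman space `A^p(ω)`, `ω = e^{-φ}`. -/
def MemAp (p : ℝ) (φ : ℂ → ℝ) (f : ℂ → ℂ) : Prop :=
  DifferentiableOn ℂ f UD ∧ apInt p φ f < ⊤

/-- Boundedness of the composition operator `C_{φ₀}` on `A^p(ω)`. -/
def CompBoundedAp (p : ℝ) (φ : ℂ → ℝ) (φ₀ : ℂ → ℂ) : Prop :=
  ∃ C : ℝ, 0 < C ∧ ∀ f : ℂ → ℂ, DifferentiableOn ℂ f UD →
    apInt p φ (f ∘ φ₀) ≤ ENNReal.ofReal C * apInt p φ f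

/-- Boundedness of the weighted composition operator `uC_{φ₀}` on `A²(ω)`. -/
def WCompBounded (φ : ℂ → ℝ) (u φ₀ : ℂ → ℂ) : Prop :=
  ∃ C : ℝ, 0 < C ∧ ∀ f : ℂ → ℂ, DifferentiableOn ℂ f UD →
    apInt 2 φ (fun z => u z * f (φ₀ z)) ≤ ENNReal.ofReal C * apInt 2 φ f

/-- The angular-derivative type quantity `d_{φ₀}(ζ) = liminf_{z→ζ} (1-|φ₀ z|)/(1-|z|)`. -/
def angD (φ₀ : ℂ → ℂ) (ζ : ℂ) : ℝ≥0∞ :=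
  Filter.liminf
    (fun z => ENNReal.ofReal ((1 - norm (φ₀ z)) / (1 - norm z)))
    (nhdsWithin ζ UD)

/-- `K` is the reproducing kernel of `A²(ω)`: `K z` is the kernel function `K_z`. -/
structure IsBergmanKernel (φ : ℂ → ℝ) (K : ℂ → ℂ → ℂ) : Prop where
  mem : ∀ z ∈ UD, MemAp 2 φ (K z)
  herm : ∀ z ∈ UD, ∀ w ∈ UD, K z w = conj (K w z)
  pos : ∀ z ∈ UD, 0 < (K z z).re
  reproducing : ∀ f : ℂ → ℂ, MemAp 2 φ f → ∀ z ∈ UD,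
    f z = ∫ ξ in UD, f ξ * conj (K z ξ) * ((wt φ ξ : ℂ)) ∂dA

/-- The normalized reproducing kernel `k_z = K_z/‖K_z‖`, using `‖K_z‖² = K(z,z)`. -/
def normKer (φ : ℂ → ℝ) (K : ℂ → ℂ → ℂ) (z ξ : ℂ) : ℂ :=
  K z ξ / ((Real.sqrt ((K z z).re) : ℂ))

/-- The Berezin transform `μ̃(z) = ∫ |k_z|² ω dμ` of a measure `μ`. -/
def berezinM (φ : ℂ → ℝ) (K : ℂ → ℂ → ℂ) (μ : Measure ℂ) (z : ℂ) : ℝ≥0∞ :=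
  ∫⁻ ξ, ENNReal.ofReal (norm (normKer φ K z ξ) ^ 2 * wt φ ξ) ∂μ

/-- The `φ₀`-Berezin transform of `|u|²`:
`B_{φ₀}(|u|²)(z) = ∫_𝔻 |k_z(φ₀ ξ)|² |u ξ|² ω(ξ) dA(ξ)`. -/
def berezinPhi (φ : ℂ → ℝ) (K : ℂ → ℂ → ℂ) (φ₀ u : ℂ → ℂ) (z : ℂ) : ℝ≥0∞ :=
  ∫⁻ ξ in UD, ENNReal.ofReal
    (norm (normKer φ K z (φ₀ ξ)) ^ 2 * norm (u ξ) ^ 2 * wt φ ξ) ∂dA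

/-- `m_τ = min(1, C₁⁻¹, C₂⁻¹)/4`. -/
def mtau (C₁ C₂ : ℝ) : ℝ := min 1 (min C₁⁻¹ C₂⁻¹) / 4

/-- The properties `(L)` of the function `τ`, with constants `C₁, C₂`. -/
structure PropL (τ : ℂ → ℝ) (C₁ C₂ : ℝ) : Prop where
  pos : ∀ z ∈ UD, 0 < τ z
  bound : ∀ z ∈ UD, τ z ≤ C₁ * (1 - norm z)
  lip : ∀ z ∈ UD, ∀ ξ ∈ UD, |τ z - τ ξ| ≤ C₂ * norm (z - ξ)

/-- A `δ`-sequence (as in the covering lemma of Oleinik). -/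
def IsDeltaSeq (τ : ℂ → ℝ) (δ : ℝ) (a : ℕ → ℂ) : Prop :=
  (∀ k, a k ∈ UD) ∧
  (∀ j k : ℕ, j ≠ k → a j ∉ Metric.ball (a k) (δ * τ (a k))) ∧
  (⋃ k, Metric.ball (a k) (δ * τ (a k))) = UD

/-- The averaging function `μ̂_δ(z) = μ(D(δτ(z)))/|D(δτ(z))|` (normalized area). -/
def avgM (τ : ℂ → ℝ) (μ : Measure ℂ) (δ : ℝ) (z : ℂ) : ℝ≥0∞ :=
  μ (Metric.ball z (δ * τ z)) / ENNReal.ofReal ((δ * τ z) ^ 2)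

/-- `μ` is a Carleson measure for `A^p(ω)`: the embedding `A^p(ω) ⊆ L^p(ω dμ)` is bounded. -/
def IsCarleson (p : ℝ) (φ : ℂ → ℝ) (μ : Measure ℂ) : Prop :=
  ∃ C : ℝ, 0 < C ∧ ∀ f : ℂ → ℂ, DifferentiableOn ℂ f UD →
    (∫⁻ z, ENNReal.ofReal (norm (f z) ^ p * wt φ z) ∂μ) ≤
      ENNReal.ofReal C * apInt p φ f

/-- The embedding `A^p(ω) → L^p(ω dμ)` is compact: from any bounded sequence of
holomorphic functions one can extract a subsequence which is Cauchy in `L^p(ω dμ)`. -/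
def IsCompactCarleson (p : ℝ) (φ : ℂ → ℝ) (μ : Measure ℂ) : Prop :=
  ∀ f : ℕ → ℂ → ℂ, (∀ n, DifferentiableOn ℂ (f n) UD) → (∀ n, apInt p φ (f n) ≤ 1) →
    ∃ σ : ℕ → ℕ, StrictMono σ ∧ ∀ ε : ℝ, 0 < ε → ∃ N : ℕ, ∀ m ≥ N, ∀ n ≥ N,
      (∫⁻ z, ENNReal.ofReal (norm (f (σ m) z - f (σ n) z) ^ p * wt φ z) ∂μ) ≤
        ENNReal.ofReal ε

/-- The measure `ω dA` restricted to the disk. -/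
def wMeasure (φ : ℂ → ℝ) : Measure ℂ :=
  (dA.restrict UD).withDensity fun z => ENNReal.ofReal (wt φ z)

/-- The Bergman space `A²(ω)` as a submodule of `L²(ω dA)`. -/
def bergmanSubmodule (φ : ℂ → ℝ) : Submodule ℂ (Lp ℂ 2 (wMeasure φ)) where
  carrier := {f | ∃ g : ℂ → ℂ, DifferentiableOn ℂ g UD ∧ ⇑f =ᵐ[wMeasure φ] g}
  add_mem' := by
    rintro f₁ f₂ ⟨g₁, hg₁, e₁⟩ ⟨g₂, hg₂, e₂⟩
    exact ⟨g₁ + g₂, hg₁.add hg₂, (Lp.coeFn_add f₁ f₂).trans (e₁.add e₂)⟩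
  zero_mem' := ⟨0, differentiableOn_const 0, Lp.coeFn_zero ℂ 2 _⟩
  smul_mem' := by
    rintro c f ⟨g, hg, e⟩
    exact ⟨c • g, hg.const_smul c, (Lp.coeFn_smul c f).trans (e.const_smul c)⟩

/-- The Bergman space `A²(ω)`, as a (pre-)Hilbert space. -/
abbrev BergSp (φ : ℂ → ℝ) := ↥(bergmanSubmodule φ)

/-- `T` represents the weighted composition operator `uC_{φ₀}` on `A²(ω)`. -/
def RepWComp (φ : ℂ → ℝ) (u φ₀ : ℂ → ℂ) (T : BergSp φ →L[ℂ] BergSp φ) : Prop :=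
  ∀ (f : BergSp φ) (g : ℂ → ℂ), DifferentiableOn ℂ g UD →
    ⇑(f : Lp ℂ 2 (wMeasure φ)) =ᵐ[wMeasure φ] g →
    ⇑(T f : Lp ℂ 2 (wMeasure φ)) =ᵐ[wMeasure φ] fun z => u z * g (φ₀ z)

/-- The essential norm of an operator: the distance to the compact operators. -/
def essNorm {H : Type} [NormedAddCommGroup H] [NormedSpace ℂ H] (T : H →L[ℂ] H) : ℝ :=
  sInf ((fun S : H →L[ℂ] H => ‖T - S‖) '' {S | IsCompactOperator ⇑S})

/-- Membership in the Schatten class `S_p`: `T` admits a singular value decomposition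
`T x = ∑ sₙ ⟨x, eₙ⟩ fₙ` with `(sₙ) ∈ ℓ^p`. -/
def MemSchatten (p : ℝ) {H : Type} [NormedAddCommGroup H] [InnerProductSpace ℂ H]
    (T : H →L[ℂ] H) : Prop :=
  ∃ (e f : ℕ → H) (s : ℕ → ℝ), Orthonormal ℂ e ∧ Orthonormal ℂ f ∧ (∀ n, 0 ≤ s n) ∧
    Summable (fun n => s n ^ p) ∧
    ∀ x : H, T x = ∑' n, (s n : ℂ) • ((inner ℂ (e n) x : ℂ) • f n)

/-- The Toeplitz-type integral operator `T_μ f(z) = ∫ f(ξ) K(z,ξ) ω(ξ) dμ(ξ)`. -/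
def toeplitzFun (φ : ℂ → ℝ) (K : ℂ → ℂ → ℂ) (μ : Measure ℂ) (f : ℂ → ℂ) (z : ℂ) : ℂ :=
  ∫ ξ, f ξ * conj (K z ξ) * ((wt φ ξ : ℂ)) ∂μ

/-- `T` represents the Toeplitz operator `T_μ` on `A²(ω)`. -/
def RepToeplitz (φ : ℂ → ℝ) (K : ℂ → ℂ → ℂ) (μ : Measure ℂ)
    (T : BergSp φ →L[ℂ] BergSp φ) : Prop :=
  ∀ (f : BergSp φ) (g : ℂ → ℂ), DifferentiableOn ℂ g UD →
    ⇑(f : Lp ℂ 2 (wMeasure φ)) =ᵐ[wMeasure φ] g →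
    ⇑(T f : Lp ℂ 2 (wMeasure φ)) =ᵐ[wMeasure φ] toeplitzFun φ K μ g

/-- The pullback measure `dμ^{φ₀}_{ω,u} = ω⁻¹ d((|u|²ω dA) ∘ φ₀⁻¹)`. -/
def pullbackM (φ : ℂ → ℝ) (u φ₀ : ℂ → ℂ) : Measure ℂ :=
  (Measure.map φ₀ ((dA.restrict UD).withDensity
      fun z => ENNReal.ofReal (norm (u z) ^ 2 * wt φ z))).withDensity
    fun z => ENNReal.ofReal (wt φ z)⁻¹

/-- The square of the operator norm of `uC_{φ₀}` on `A²(ω)`, as a supremum of ratios. -/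
def wcompNormSq (φ : ℂ → ℝ) (u φ₀ : ℂ → ℂ) : ℝ≥0∞ :=
  ⨆ f : {f : ℂ → ℂ // DifferentiableOn ℂ f UD},
    apInt 2 φ (fun z => u z * f.1 (φ₀ z)) / apInt 2 φ f.1

/-- `M_{φ₀}(r) = sup_θ |φ₀(r e^{iθ})|`. -/
def Mrad (φ₀ : ℂ → ℂ) (r : ℝ) : ℝ :=
  ⨆ θ : ℝ, norm (φ₀ ((r : ℂ) * Complex.exp ((θ : ℂ) * Complex.I)))

/-- `φ` is subharmonic on the disk: upper semicontinuous and satisfying the sub-mean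
value inequality on circles. -/
def SubharmonicOnD (φ : ℂ → ℝ) : Prop :=
  UpperSemicontinuousOn φ UD ∧
  ∀ z ∈ UD, ∀ r : ℝ, 0 < r → Metric.closedBall z r ⊆ UD →
    φ z ≤ (1 / (2 * Real.pi)) *
      ∫ θ in (0 : ℝ)..(2 * Real.pi), φ (z + (r : ℂ) * Complex.exp ((θ : ℂ) * Complex.I))

end

/-!
The points are chosen greedily: `a_n` maximizes `τ` over the part of `𝔻` not yet covered by
the disks `D(δτ(a_m))`, `m < n`; the maximum exists because `τ ≤ C₁(1 - |z|)` vanishes at the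
boundary. Then `τ(a_n)` decreases, which gives the separation (1) in both directions, and a point
`z` missed by all the disks would have `τ(z) ≤ τ(a_n)` for all `n`, making infinitely many `a_n`
pairwise `δτ(z)`-separated in the unit disk, which is impossible; this gives (2). The Lipschitz
bound makes `τ` comparable on each disk `D(3δτ(a))`, which gives (3), and a volume count of the
disjoint disks `D(2δτ(z)/7)` around the `a_k` with `z ∈ D(3δτ(a_k))` bounds the multiplicity
by `43²`.
-/

open Metric

section Packing

variable {E ι : Type*} [NormedAddCommGroup E] [NormedSpace ℝ E] [FiniteDimensional ℝ E]
  {a : ι → E} {c : E} {R ρ : ℝ}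

theorem Finset.card_mul_pow_le_of_separated (t : Finset ι) (hR : 0 ≤ R) (hρ : 0 < ρ)
    (hmem : ∀ i ∈ t, dist (a i) c ≤ R)
    (hsep : (t : Set ι).Pairwise fun i j => 2 * ρ ≤ dist (a i) (a j)) :
    (t.card : ℝ) * ρ ^ Module.finrank ℝ E ≤ (R + ρ) ^ Module.finrank ℝ E := by
  borelize E
  let μ : Measure E := Measure.addHaar
  have hdisj : (t : Set ι).PairwiseDisjoint fun i => ball (a i) ρ := fun i hi j hj hij =>
    ball_disjoint_ball (by linarith [hsep hi hj hij])
  have hsub : (⋃ i ∈ t, ball (a i) ρ) ⊆ ball c (R + ρ) := iUnion₂_subset fun i hi =>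
    ball_subset_ball' (by linarith [hmem i hi])
  have hvol := (measure_biUnion_finset (μ := μ) hdisj fun _ _ => measurableSet_ball).symm.trans_le
    (measure_mono hsub)
  simp only [μ.addHaar_ball_of_pos _ hρ, μ.addHaar_ball_of_pos _ (by linarith : 0 < R + ρ),
    Finset.sum_const, nsmul_eq_mul, ← mul_assoc] at hvol
  rw [ENNReal.mul_le_mul_iff_left (measure_ball_pos μ 0 one_pos).ne' measure_ball_lt_top.ne,
    ← ENNReal.ofReal_natCast, ← ENNReal.ofReal_mul (by positivity),
    ENNReal.ofReal_le_ofReal_iff (by positivity)] at hvol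
  exact hvol

theorem Set.finite_and_ncard_mul_pow_le_of_separated {s : Set ι} (hR : 0 ≤ R) (hρ : 0 < ρ)
    (hmem : ∀ i ∈ s, dist (a i) c ≤ R)
    (hsep : s.Pairwise fun i j => 2 * ρ ≤ dist (a i) (a j)) :
    s.Finite ∧ (s.ncard : ℝ) * ρ ^ Module.finrank ℝ E ≤ (R + ρ) ^ Module.finrank ℝ E := by
  have hcard (t : Finset ι) (ht : ↑t ⊆ s) := t.card_mul_pow_le_of_separated hR hρ
    (fun i hi => hmem i (ht hi)) (hsep.mono ht)
  have hfin : s.Finite := by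
    by_contra hinf
    obtain ⟨t, ht, hcardt⟩ := Set.Infinite.exists_subset_card_eq hinf
      (⌈(R + ρ) ^ Module.finrank ℝ E / ρ ^ Module.finrank ℝ E⌉₊ + 1)
    have := hcard t ht
    rw [hcardt, ← le_div_iff₀ (by positivity)] at this
    push_cast at this
    linarith [Nat.le_ceil ((R + ρ) ^ Module.finrank ℝ E / ρ ^ Module.finrank ℝ E)]
  refine ⟨hfin, ?_⟩
  rw [Set.ncard_eq_toFinset_card s hfin]
  exact hcard _ hfin.coe_toFinset.subset

end Packing

namespace PropL

variable {τ : ℂ → ℝ} {C₁ C₂ : ℝ}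

lemma C₁_pos (hL : PropL τ C₁ C₂) : 0 < C₁ := by
  have h0 : (0 : ℂ) ∈ UD := mem_ball_self one_pos
  simpa using (hL.pos 0 h0).trans_le (hL.bound 0 h0)

lemma C₂_nonneg (hL : PropL τ C₁ C₂) : 0 ≤ C₂ := by
  have h0 : (0 : ℂ) ∈ UD := mem_ball_self one_pos
  have hhalf : (1 / 2 : ℂ) ∈ UD := by simp [UD]; norm_num
  have := (abs_nonneg _).trans (hL.lip 0 h0 _ hhalf)
  norm_num at this
  linarith

lemma continuousOn (hL : PropL τ C₁ C₂) : ContinuousOn τ UD :=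
  (LipschitzOnWith.of_dist_le_mul (K := C₂.toNNReal) fun z hz ξ hξ => by
    simpa only [Real.coe_toNNReal _ hL.C₂_nonneg, Real.dist_eq, Complex.dist_eq] using
      hL.lip z hz ξ hξ).continuousOn

lemma tau_comparable (hL : PropL τ C₁ C₂) {z w : ℂ} (hz : z ∈ UD) (hw : w ∈ UD) {t : ℝ}
    (h : dist z w ≤ t * τ w) :
    (1 - C₂ * t) * τ w ≤ τ z ∧ τ z ≤ (1 + C₂ * t) * τ w := by
  have hlip : |τ z - τ w| ≤ C₂ * (t * τ w) :=
    (hL.lip z hz w hw).trans (mul_le_mul_of_nonneg_left (by rwa [← Complex.dist_eq]) hL.C₂_nonneg)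
  rw [abs_le] at hlip
  constructor <;> linarith

lemma closedBall_subset_UD (hL : PropL τ C₁ C₂) {δ : ℝ} (hδ : 0 ≤ δ) (hδC₁ : δ * C₁ < 1)
    {z : ℂ} (hz : z ∈ UD) : closedBall z (δ * τ z) ⊆ UD := by
  have hz' : ‖z‖ < 1 := by simpa [UD] using hz
  have : δ * τ z < 1 - ‖z‖ := calc
    δ * τ z ≤ δ * (C₁ * (1 - ‖z‖)) := mul_le_mul_of_nonneg_left (hL.bound z hz) hδ
    _ < 1 - ‖z‖ := by nlinarith
  exact (closedBall_subset_ball (by linarith)).trans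
    (ball_subset_ball' (by simp) : ball z (1 - ‖z‖) ⊆ UD)

/-- Since `τ ≤ C₁ (1 - |z|)` vanishes at the boundary, the maximum over `UD \ U` is attained on a
compact piece `|z| ≤ c < 1`. -/
lemma exists_isMaxOn_diff (hL : PropL τ C₁ C₂) {U : Set ℂ} (hU : IsOpen U)
    (hne : (UD \ U).Nonempty) : ∃ w ∈ UD \ U, IsMaxOn τ (UD \ U) w := by
  obtain ⟨w₀, hw₀⟩ := hne
  have hw₀' : ‖w₀‖ < 1 := by simpa [UD] using hw₀.1
  have hτw₀ : 0 < τ w₀ / C₁ := div_pos (hL.pos w₀ hw₀.1) hL.C₁_pos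
  set c := max (1 - τ w₀ / C₁) ‖w₀‖
  have hK : closedBall 0 c \ U ⊆ UD \ U :=
    sdiff_subset_sdiff_left (closedBall_subset_ball (max_lt (by linarith) hw₀'))
  have hw₀K : w₀ ∈ closedBall 0 c \ U := ⟨by simp [c], hw₀.2⟩
  obtain ⟨w, hwK, hwmax⟩ := ((isCompact_closedBall 0 c).diff hU).exists_isMaxOn ⟨w₀, hw₀K⟩
    (hL.continuousOn.mono (hK.trans sdiff_subset))
  refine ⟨w, hK hwK, fun v hv => ?_⟩
  by_cases hvc : ‖v‖ ≤ c
  · exact hwmax ⟨by simpa using hvc, hv.2⟩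
  · have : C₁ * (1 - ‖v‖) < τ w₀ := by
      rw [← lt_div_iff₀' hL.C₁_pos]
      linarith [le_max_left (1 - τ w₀ / C₁) ‖w₀‖]
    exact (hL.bound v hv.1).trans (this.le.trans (hwmax hw₀K))

end PropL

noncomputable section

def coveredBy (τ : ℂ → ℝ) (δ : ℝ) (S : Finset ℂ) : Set ℂ := ⋃ b ∈ S, ball b (δ * τ b)

/-- A junk value when `τ` has no maximum on `UD \ coveredBy τ δ S`. -/
def greedyStep (τ : ℂ → ℝ) (δ : ℝ) (S : Finset ℂ) : ℂ :=
  Classical.epsilon fun w => w ∈ UD \ coveredBy τ δ S ∧ IsMaxOn τ (UD \ coveredBy τ δ S) w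

def greedyPrefix (τ : ℂ → ℝ) (δ : ℝ) : ℕ → Finset ℂ
  | 0 => ∅
  | n + 1 => insert (greedyStep τ δ (greedyPrefix τ δ n)) (greedyPrefix τ δ n)

def greedySeq (τ : ℂ → ℝ) (δ : ℝ) (n : ℕ) : ℂ := greedyStep τ δ (greedyPrefix τ δ n)

end

section Greedy

variable {τ : ℂ → ℝ} {δ : ℝ}

lemma isOpen_coveredBy (S : Finset ℂ) : IsOpen (coveredBy τ δ S) :=
  isOpen_biUnion fun _ _ => isOpen_ball

lemma coveredBy_mono {S T : Finset ℂ} (h : S ⊆ T) : coveredBy τ δ S ⊆ coveredBy τ δ T :=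
  biUnion_subset_biUnion_left h

lemma greedyPrefix_eq_image (n : ℕ) :
    greedyPrefix τ δ n = (Finset.range n).image (greedySeq τ δ) := by
  induction n with
  | zero => rfl
  | succ n ih => rw [greedyPrefix, Finset.range_add_one, Finset.image_insert, ← ih]; rfl

lemma greedyPrefix_mono {m n : ℕ} (h : m ≤ n) : greedyPrefix τ δ m ⊆ greedyPrefix τ δ n := by
  simp only [greedyPrefix_eq_image]
  exact Finset.image_subset_image (Finset.range_subset_range.2 h)

lemma greedySeq_mem_greedyPrefix {m n : ℕ} (h : m < n) : greedySeq τ δ m ∈ greedyPrefix τ δ n := by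
  rw [greedyPrefix_eq_image]
  exact Finset.mem_image_of_mem _ (Finset.mem_range.2 h)

variable {C₁ C₂ : ℝ} (hL : PropL τ C₁ C₂) (hδ : 0 ≤ δ) (hδC₁ : δ * C₁ < 1)
include hL hδ hδC₁

lemma greedyStep_spec {S : Finset ℂ} (hS : ↑S ⊆ UD) :
    greedyStep τ δ S ∈ UD \ coveredBy τ δ S ∧
      IsMaxOn τ (UD \ coveredBy τ δ S) (greedyStep τ δ S) := by
  refine Classical.epsilon_spec (hL.exists_isMaxOn_diff (isOpen_coveredBy S) ?_)
  have hcl : closure (coveredBy τ δ S) ⊆ UD := by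
    refine (closure_minimal (iUnion₂_mono fun b _ => ball_subset_closedBall) ?_).trans ?_
    · exact S.finite_toSet.isClosed_biUnion fun _ _ => isClosed_closedBall
    · exact iUnion₂_subset fun b hb => hL.closedBall_subset_UD hδ hδC₁ (hS hb)
  -- `UD` is not closed: `1 ∈ closure UD`
  by_contra hempty
  rw [not_nonempty_iff_eq_empty, sdiff_eq_empty] at hempty
  have h1 : (1 : ℂ) ∈ closure UD := by rw [UD, closure_ball _ one_ne_zero]; simp
  simpa [UD] using hcl (closure_mono hempty h1)

lemma greedyPrefix_subset_UD (n : ℕ) : ↑(greedyPrefix τ δ n) ⊆ UD := by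
  induction n with
  | zero => simp [greedyPrefix]
  | succ n ih =>
    rw [greedyPrefix, Finset.coe_insert]
    exact insert_subset (greedyStep_spec hL hδ hδC₁ ih).1.1 ih

lemma greedySeq_spec (n : ℕ) :
    greedySeq τ δ n ∈ UD \ coveredBy τ δ (greedyPrefix τ δ n) ∧
      IsMaxOn τ (UD \ coveredBy τ δ (greedyPrefix τ δ n)) (greedySeq τ δ n) :=
  greedyStep_spec hL hδ hδC₁ (greedyPrefix_subset_UD hL hδ hδC₁ n)

lemma greedySeq_mem_UD (n : ℕ) : greedySeq τ δ n ∈ UD := (greedySeq_spec hL hδ hδC₁ n).1.1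

lemma tau_greedySeq_antitone : Antitone (τ ∘ greedySeq τ δ) := fun m n h =>
  (greedySeq_spec hL hδ hδC₁ m).2
    ⟨greedySeq_mem_UD hL hδ hδC₁ n,
      fun hcov => (greedySeq_spec hL hδ hδC₁ n).1.2 (coveredBy_mono (greedyPrefix_mono h) hcov)⟩

lemma greedySeq_not_mem_ball_of_lt {m n : ℕ} (h : m < n) :
    greedySeq τ δ n ∉ ball (greedySeq τ δ m) (δ * τ (greedySeq τ δ m)) := fun hmem =>
  (greedySeq_spec hL hδ hδC₁ n).1.2 (mem_biUnion (greedySeq_mem_greedyPrefix h) hmem)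

lemma greedySeq_not_mem_ball {j k : ℕ} (h : j ≠ k) :
    greedySeq τ δ j ∉ ball (greedySeq τ δ k) (δ * τ (greedySeq τ δ k)) := by
  rcases h.lt_or_gt with hjk | hkj
  · -- `a_k` is outside the disk of `a_j`, which is at least as large
    intro hmem
    refine greedySeq_not_mem_ball_of_lt hL hδ hδC₁ hjk ?_
    rw [mem_ball_comm] at hmem
    exact ball_subset_ball (mul_le_mul_of_nonneg_left
      (tau_greedySeq_antitone hL hδ hδC₁ hjk.le) hδ) hmem
  · exact greedySeq_not_mem_ball_of_lt hL hδ hδC₁ hkj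

end Greedy

section Covering

variable {τ : ℂ → ℝ} {C₁ C₂ δ : ℝ}

theorem iUnion_ball_greedySeq (hL : PropL τ C₁ C₂) (hδ : 0 < δ) (hδC₁ : δ * C₁ < 1) :
    ⋃ k, ball (greedySeq τ δ k) (δ * τ (greedySeq τ δ k)) = UD := by
  set a := greedySeq τ δ
  refine Subset.antisymm (iUnion_subset fun k => ball_subset_closedBall.trans
    (hL.closedBall_subset_UD hδ.le hδC₁ (greedySeq_mem_UD hL hδ.le hδC₁ k))) fun z hz => ?_
  by_contra hnot
  -- otherwise `τ z ≤ τ (a n)` for all `n`, so the `a n` are uniformly separated in the unit disk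
  have hτ (n : ℕ) : τ z ≤ τ (a n) := by
    refine (greedySeq_spec hL hδ.le hδC₁ n).2 ⟨hz, fun hcov => hnot ?_⟩
    simp only [coveredBy, greedyPrefix_eq_image, Finset.mem_image, Finset.mem_range,
      iUnion_exists, biUnion_and', iUnion_iUnion_eq_right, mem_iUnion] at hcov
    obtain ⟨m, -, hm⟩ := hcov
    exact mem_iUnion.2 ⟨m, hm⟩
  have hsep : (univ : Set ℕ).Pairwise fun i j => 2 * (δ * τ z / 2) ≤ dist (a i) (a j) :=
    fun i _ j _ hij => by
      have := greedySeq_not_mem_ball hL hδ.le hδC₁ hij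
      rw [mem_ball, not_lt] at this
      linarith [mul_le_mul_of_nonneg_left (hτ j) hδ.le]
  have hfin := (Set.finite_and_ncard_mul_pow_le_of_separated (c := 0) zero_le_one
    (by have := hL.pos z hz; positivity)
    (fun i _ => (mem_ball.1 (greedySeq_mem_UD hL hδ.le hδC₁ i)).le)
    hsep).1
  exact infinite_univ hfin

theorem PropL.biUnion_ball_subset_ball (hL : PropL τ C₁ C₂) (hδ : 0 ≤ δ) (hδC₁ : δ * C₁ < 1)
    (hδC₂ : δ * C₂ ≤ 1) {a : ℂ} (ha : a ∈ UD) :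
    (⋃ z ∈ ball a (δ * τ a), ball z (δ * τ z)) ⊆ ball a (3 * δ * τ a) := by
  refine iUnion₂_subset fun z hz w hw => ?_
  have hzU := ball_subset_closedBall.trans (hL.closedBall_subset_UD hδ hδC₁ ha) hz
  have hτz := (hL.tau_comparable hzU ha (mem_ball.1 hz).le).2
  have hτa := hL.pos a ha
  rw [mem_ball] at hz hw ⊢
  calc dist w a ≤ dist w z + dist z a := dist_triangle w z a
    _ < δ * τ z + δ * τ a := add_lt_add hw hz
    _ ≤ δ * ((1 + C₂ * δ) * τ a) + δ * τ a := by gcongr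
    _ ≤ 3 * δ * τ a := by nlinarith [mul_nonneg hδ hτa.le]

theorem PropL.finite_and_ncard_le_of_separated {ι : Type*} {a : ι → ℂ} (hL : PropL τ C₁ C₂)
    (hδ : 0 < δ) (hδC₂ : δ * C₂ ≤ 1 / 4) (ha : ∀ k, a k ∈ UD)
    (hsep : ∀ j k, j ≠ k → a j ∉ ball (a k) (δ * τ (a k))) {z : ℂ} (hz : z ∈ UD) :
    {k | z ∈ ball (a k) (3 * δ * τ (a k))}.Finite ∧
      {k | z ∈ ball (a k) (3 * δ * τ (a k))}.ncard ≤ 43 ^ 2 := by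
  have hτz := hL.pos z hz
  have hcomp (k : ι) (hk : z ∈ ball (a k) (3 * δ * τ (a k))) :
      dist (a k) z ≤ 12 * δ * τ z ∧ 4 / 7 * (δ * τ z) ≤ δ * τ (a k) := by
    have hk' := (mem_ball.1 hk).le
    have hτk := hL.pos (a k) (ha k)
    have hcmp := hL.tau_comparable hz (ha k) hk'
    have hslack := mul_nonneg (by linarith : 0 ≤ 1 / 4 - δ * C₂) hτk.le
    have h₁ : τ (a k) ≤ 4 * τ z := by nlinarith
    have h₂ : 4 * τ z ≤ 7 * τ (a k) := by nlinarith
    rw [dist_comm] at hk'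
    constructor <;> nlinarith
  obtain ⟨ρ, hρ_def⟩ : ∃ ρ, ρ = 2 / 7 * (δ * τ z) := ⟨_, rfl⟩
  have hρ : 0 < ρ := by rw [hρ_def]; positivity
  obtain ⟨hfin, hcard⟩ := Set.finite_and_ncard_mul_pow_le_of_separated (a := a) (c := z)
    (R := 42 * ρ) (by positivity) hρ (fun k hk => by linarith [(hcomp k hk).1])
    fun i _ j hj hij => by
      have := hsep i j hij
      rw [mem_ball, not_lt] at this
      linarith [(hcomp j hj).2]
  rw [Complex.finrank_real_complex, show (42 * ρ + ρ) ^ 2 = 43 ^ 2 * ρ ^ 2 by ring] at hcard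
  exact ⟨hfin, by exact_mod_cast le_of_mul_le_mul_right hcard (pow_pos hρ 2)⟩

lemma mul_lt_quarter_of_lt_mtau (hδ : 0 < δ) (h : δ < mtau C₁ C₂) :
    δ * C₁ < 1 / 4 ∧ δ * C₂ < 1 / 4 := by
  have key {C : ℝ} (hC : mtau C₁ C₂ ≤ C⁻¹ / 4) : δ * C < 1 / 4 := by
    have hC : 0 < C := inv_pos.1 (by linarith)
    calc δ * C < C⁻¹ / 4 * C := by gcongr; linarith
      _ = 1 / 4 := by field_simp
  exact ⟨key (by unfold mtau; gcongr; exact (min_le_right _ _).trans (min_le_left _ _)),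
    key (by unfold mtau; gcongr; exact (min_le_right _ _).trans (min_le_right _ _))⟩

end Covering

theorem stmt19_general (τ : ℂ → ℝ) (C₁ C₂ δ : ℝ)
    (hL : PropL τ C₁ C₂) (hδ₁ : 0 < δ) (hδ₂ : δ < mtau C₁ C₂) :
    ∃ a : ℕ → ℂ, (∀ k, a k ∈ UD) ∧
      (∀ j k : ℕ, j ≠ k → a j ∉ Metric.ball (a k) (δ * τ (a k))) ∧
      (⋃ k, Metric.ball (a k) (δ * τ (a k))) = UD ∧
      (∀ k, (⋃ z ∈ Metric.ball (a k) (δ * τ (a k)), Metric.ball z (δ * τ z)) ⊆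
        Metric.ball (a k) (3 * δ * τ (a k))) ∧
      ∃ N : ℕ, ∀ z ∈ UD,
        {k : ℕ | z ∈ Metric.ball (a k) (3 * δ * τ (a k))}.Finite ∧
        ({k : ℕ | z ∈ Metric.ball (a k) (3 * δ * τ (a k))}).ncard ≤ N := by
  obtain ⟨hδC₁, hδC₂⟩ := mul_lt_quarter_of_lt_mtau hδ₁ hδ₂
  have hδC₁' : δ * C₁ < 1 := by linarith
  have hmem := greedySeq_mem_UD hL hδ₁.le hδC₁'
  have hsep (j k : ℕ) := greedySeq_not_mem_ball (j := j) (k := k) hL hδ₁.le hδC₁'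
  exact ⟨greedySeq τ δ, hmem, hsep, iUnion_ball_greedySeq hL hδ₁ hδC₁',
    fun k => hL.biUnion_ball_subset_ball hδ₁.le hδC₁' (by linarith) (hmem k),
    43 ^ 2, fun z hz => hL.finite_and_ncard_le_of_separated hδ₁ hδC₂.le hmem hsep hz⟩

theorem stmt19 (τ : ℂ → ℝ) (C₁ C₂ δ : ℝ) (hC₁ : 0 < C₁) (hC₂ : 0 < C₂)
    (hL : PropL τ C₁ C₂) (hδ₁ : 0 < δ) (hδ₂ : δ < mtau C₁ C₂) :
    ∃ a : ℕ → ℂ, (∀ k, a k ∈ UD) ∧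
      (∀ j k : ℕ, j ≠ k → a j ∉ Metric.ball (a k) (δ * τ (a k))) ∧
      (⋃ k, Metric.ball (a k) (δ * τ (a k))) = UD ∧
      (∀ k, (⋃ z ∈ Metric.ball (a k) (δ * τ (a k)), Metric.ball z (δ * τ z)) ⊆
        Metric.ball (a k) (3 * δ * τ (a k))) ∧
      ∃ N : ℕ, ∀ z ∈ UD,
        {k : ℕ | z ∈ Metric.ball (a k) (3 * δ * τ (a k))}.Finite ∧
        ({k : ℕ | z ∈ Metric.ball (a k) (3 * δ * τ (a k))}).ncard ≤ N :=
  stmt19_general τ C₁ C₂ δ hL hδ₁ hδ₂
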